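/- arXiv:2111.01094 — 2 statements merged into one kernel-verified Lean document; each statement's English description precedes it below -/
import Mathlib

section
/- In particular, for X = L²(ℝ, e^{-t²} dt) and every nonzero real polynomial p of degree at most n, ‖p'‖_X ≤ √(2n) ‖p‖_X, with equality iff p is a nonzero scalar multiple of the Hermite polynomial H_n. -/
open MeasureTheory Polynomial

/-- Physicists' Hermite polynomials. -/
noncomputable def physHermite : ℕ → Polynomial ℝ
  | 0 => 1
  | 1 => C (2 : ℝ) * X
  | (n + 2) => C (2 : ℝ) * X * physHermite (n + 1) - C (2 * (n + 1) : ℝ) * physHermite n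

/-- The `L²(ℝ, e^{-t²} dt)` norm of a polynomial. -/
noncomputable def hermiteNorm (p : Polynomial ℝ) : ℝ :=
  Real.sqrt (∫ t : ℝ, (p.eval t) ^ 2 * Real.exp (-t ^ 2))

/-!
Integrating by parts against `e^{-t²}` turns `H_{n+1} = 2X H_n - H_n'` into
`∫ p H_{n+1} e^{-t²} = ∫ p' H_n e^{-t²}`, hence `∫ p H_n e^{-t²} = ∫ p^{(n)} e^{-t²}`: the `H_k` are
orthogonal and `‖H_{k+1}‖² = 2(k+1)‖H_k‖²`. Expanding `p = ∑_{k ≤ n} c_k H_k` and using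
`H_k' = 2k H_{k-1}` gives `‖p‖² = ∑ c_k² ‖H_k‖²` and `‖p'‖² = ∑ 2k c_k² ‖H_k‖²`, so
`‖p'‖² ≤ 2n ‖p‖²`, with equality exactly when `c_k = 0` for all `k < n`.
-/

open Finset Real

lemma physHermite_succ (n : ℕ) :
    physHermite (n + 1) = C 2 * X * physHermite n - C (2 * n : ℝ) * physHermite (n - 1) := by
  cases n with
  | zero => simp [physHermite]
  | succ n => push_cast [physHermite]; ring

lemma derivative_physHermite (n : ℕ) :
    derivative (physHermite n) = C (2 * n : ℝ) * physHermite (n - 1) := by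
  induction n using physHermite.induct with
  | case1 => simp [physHermite]
  | case2 => simp [physHermite]
  | case3 n ih₁ ih₀ =>
    rw [physHermite, derivative_sub, derivative_mul, derivative_mul, derivative_mul, ih₁, ih₀,
      Nat.add_sub_cancel, Nat.succ_sub_one, physHermite_succ]
    simp only [derivative_C, derivative_X, zero_mul, zero_add, mul_one]
    push_cast [C_mul, C_add, C_1, map_natCast, map_ofNat]
    ring

lemma physHermite_succ_eq_sub_derivative (n : ℕ) :
    physHermite (n + 1) = C 2 * X * physHermite n - derivative (physHermite n) := by
  rw [physHermite_succ, derivative_physHermite]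

lemma natDegree_physHermite_le (n : ℕ) : (physHermite n).natDegree ≤ n := by
  induction n using physHermite.induct with
  | case1 => simp [physHermite]
  | case2 => exact (natDegree_C_mul_le _ _).trans natDegree_X_le
  | case3 n ih₁ ih₀ =>
    rw [physHermite, mul_assoc]
    refine (natDegree_sub_le _ _).trans (max_le ((natDegree_C_mul_le _ _).trans ?_)
      ((natDegree_C_mul_le _ _).trans (by omega)))
    exact (natDegree_mul_le_of_le natDegree_X_le ih₁).trans (by omega)

lemma coeff_physHermite_self (n : ℕ) : (physHermite n).coeff n = 2 ^ n := by
  induction n using physHermite.induct with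
  | case1 => simp [physHermite]
  | case2 => simp [physHermite]
  | case3 n ih₁ _ =>
    rw [physHermite, coeff_sub, mul_assoc, coeff_C_mul, coeff_C_mul, coeff_X_mul, ih₁,
      coeff_eq_zero_of_natDegree_lt ((natDegree_physHermite_le n).trans_lt (by omega)),
      pow_succ _ (n + 1)]
    ring

lemma degree_physHermite (n : ℕ) : (physHermite n).degree = n :=
  degree_eq_of_le_of_coeff_ne_zero (degree_le_of_natDegree_le (natDegree_physHermite_le n))
    (by simp [coeff_physHermite_self])

lemma leadingCoeff_physHermite (n : ℕ) : (physHermite n).leadingCoeff = 2 ^ n := by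
  rw [leadingCoeff, natDegree_eq_of_degree_eq_some (degree_physHermite n), coeff_physHermite_self]

noncomputable def physHermiteSequence : Polynomial.Sequence ℝ := ⟨physHermite, degree_physHermite⟩

lemma exists_sum_smul_physHermite_eq {n : ℕ} {p : ℝ[X]} (hp : p.natDegree ≤ n) :
    ∃ c : ℕ → ℝ, ∑ k ∈ range (n + 1), c k • physHermite k = p := by
  have hspan := physHermiteSequence.span_degreeLT (m := n + 1) fun k _ => by
    simp [physHermiteSequence, leadingCoeff_physHermite]
  have hmem : p ∈ Submodule.span ℝ (physHermiteSequence '' Set.Iio (n + 1)) := by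
    rw [hspan, mem_degreeLT]
    exact (degree_le_of_natDegree_le hp).trans_lt (by exact_mod_cast Nat.lt_succ_self n)
  rwa [← coe_range, Submodule.mem_span_image_finset_iff_exists_fun'] at hmem

lemma integrable_eval_mul_exp_neg_sq (p : ℝ[X]) :
    Integrable fun t => p.eval t * Real.exp (-t ^ 2) := by
  have hmonomial (k : ℕ) : Integrable fun t : ℝ => t ^ k * Real.exp (-t ^ 2) := by
    simpa [Real.rpow_natCast] using integrable_rpow_mul_exp_neg_mul_sq one_pos
      (neg_one_lt_zero.trans_le (Nat.cast_nonneg k))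
  simp_rw [eval_eq_sum_range, sum_mul, mul_assoc]
  exact integrable_finsetSum _ fun k _ => (hmonomial k).const_mul _

noncomputable def gaussIntegral : ℝ[X] →ₗ[ℝ] ℝ where
  toFun p := ∫ t, p.eval t * Real.exp (-t ^ 2)
  map_add' p q := by
    simp_rw [eval_add, add_mul]
    exact integral_add (integrable_eval_mul_exp_neg_sq p) (integrable_eval_mul_exp_neg_sq q)
  map_smul' a p := by
    simp_rw [eval_smul, smul_eq_mul, mul_assoc, RingHom.id_apply]
    exact integral_const_mul a _

lemma gaussIntegral_apply (p : ℝ[X]) :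
    gaussIntegral p = ∫ t, p.eval t * Real.exp (-t ^ 2) := rfl

lemma hermiteNorm_eq_sqrt_gaussIntegral (p : ℝ[X]) :
    hermiteNorm p = √(gaussIntegral (p * p)) := by
  simp [hermiteNorm, gaussIntegral_apply, sq]

lemma gaussIntegral_one : gaussIntegral 1 = √π := by
  simpa [gaussIntegral_apply] using integral_gaussian 1

lemma gaussIntegral_derivative_sub (q : ℝ[X]) : gaussIntegral (derivative q - C 2 * X * q) = 0 := by
  have hderiv (t : ℝ) : HasDerivAt (fun t => q.eval t * Real.exp (-t ^ 2))
      ((derivative q - C 2 * X * q).eval t * Real.exp (-t ^ 2)) t := by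
    have hexp : HasDerivAt (fun t : ℝ => Real.exp (-t ^ 2)) (Real.exp (-t ^ 2) * (-2 * t)) t := by
      simpa using ((hasDerivAt_pow 2 t).fun_neg).exp
    refine ((q.hasDerivAt t).fun_mul hexp).congr_deriv ?_
    simp only [eval_sub, eval_mul, eval_C, eval_X]
    ring
  exact integral_eq_zero_of_hasDerivAt_of_integrable hderiv
    (integrable_eval_mul_exp_neg_sq _) (integrable_eval_mul_exp_neg_sq q)

lemma gaussIntegral_mul_physHermite_succ (p : ℝ[X]) (n : ℕ) :
    gaussIntegral (p * physHermite (n + 1)) = gaussIntegral (derivative p * physHermite n) := by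
  have hparts : p * physHermite (n + 1) = derivative p * physHermite n -
      (derivative (p * physHermite n) - C 2 * X * (p * physHermite n)) := by
    rw [physHermite_succ_eq_sub_derivative, derivative_mul]
    ring
  rw [hparts, map_sub, gaussIntegral_derivative_sub, sub_zero]

lemma gaussIntegral_mul_physHermite (p : ℝ[X]) (n : ℕ) :
    gaussIntegral (p * physHermite n) = gaussIntegral (derivative^[n] p) := by
  induction n generalizing p with
  | zero => simp [physHermite]
  | succ n ih => rw [gaussIntegral_mul_physHermite_succ, ih, Function.iterate_succ_apply]

lemma gaussIntegral_physHermite_mul_physHermite_of_ne {j k : ℕ} (hjk : j ≠ k) :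
    gaussIntegral (physHermite j * physHermite k) = 0 := by
  wlog hlt : j < k generalizing j k
  · rw [mul_comm]
    exact this hjk.symm (hjk.lt_or_gt.resolve_left hlt)
  rw [gaussIntegral_mul_physHermite,
    iterate_derivative_eq_zero ((natDegree_physHermite_le j).trans_lt hlt), map_zero]

lemma gaussIntegral_physHermite_mul_self_succ (n : ℕ) :
    gaussIntegral (physHermite (n + 1) * physHermite (n + 1)) =
      2 * (n + 1) * gaussIntegral (physHermite n * physHermite n) := by
  rw [gaussIntegral_mul_physHermite_succ, derivative_physHermite, Nat.add_sub_cancel, mul_assoc,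
    ← smul_eq_C_mul, map_smul, smul_eq_mul]
  push_cast
  ring

lemma gaussIntegral_physHermite_mul_self_pos (n : ℕ) :
    0 < gaussIntegral (physHermite n * physHermite n) := by
  induction n with
  | zero => simp [physHermite, gaussIntegral_one, pi_pos]
  | succ n ih => rw [gaussIntegral_physHermite_mul_self_succ]; positivity

lemma gaussIntegral_sum_smul_physHermite_sq (s : Finset ℕ) (c : ℕ → ℝ) :
    gaussIntegral ((∑ k ∈ s, c k • physHermite k) * ∑ k ∈ s, c k • physHermite k) =
      ∑ k ∈ s, c k ^ 2 * gaussIntegral (physHermite k * physHermite k) := by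
  simp_rw [sum_mul_sum, map_sum, smul_mul_smul_comm, map_smul, smul_eq_mul]
  refine sum_congr rfl fun k hk => ?_
  rw [sum_eq_single k (fun l _ hlk => by
      rw [gaussIntegral_physHermite_mul_physHermite_of_ne hlk.symm, mul_zero])
    (fun hk' => absurd hk hk'), sq, mul_assoc]

lemma derivative_sum_smul_physHermite (n : ℕ) (c : ℕ → ℝ) :
    derivative (∑ k ∈ range (n + 1), c k • physHermite k) =
      ∑ k ∈ range n, (2 * (k + 1) * c (k + 1)) • physHermite k := by
  rw [derivative_sum, sum_range_succ']
  simp_rw [derivative_smul, derivative_physHermite, ← smul_eq_C_mul, smul_smul]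
  simp [mul_comm]

lemma hermiteNorm_sum_smul_physHermite (n : ℕ) (c : ℕ → ℝ) :
    hermiteNorm (∑ k ∈ range (n + 1), c k • physHermite k) =
      √(∑ k ∈ range (n + 1), c k ^ 2 * gaussIntegral (physHermite k * physHermite k)) := by
  rw [hermiteNorm_eq_sqrt_gaussIntegral, gaussIntegral_sum_smul_physHermite_sq]

lemma hermiteNorm_derivative_sum_smul_physHermite (n : ℕ) (c : ℕ → ℝ) :
    hermiteNorm (derivative (∑ k ∈ range (n + 1), c k • physHermite k)) =
      √(2 * ∑ k ∈ range (n + 1),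
        k * (c k ^ 2 * gaussIntegral (physHermite k * physHermite k))) := by
  rw [hermiteNorm_eq_sqrt_gaussIntegral, derivative_sum_smul_physHermite,
    gaussIntegral_sum_smul_physHermite_sq, sum_range_succ']
  simp only [gaussIntegral_physHermite_mul_self_succ, CharP.cast_eq_zero, zero_mul, add_zero,
    Nat.cast_add, Nat.cast_one, mul_sum]
  congr 1
  exact sum_congr rfl fun k _ => by ring

lemma sum_range_succ_natCast_mul_le {a : ℕ → ℝ} (ha : ∀ k, 0 ≤ a k) (n : ℕ) :
    ∑ k ∈ range (n + 1), (k : ℝ) * a k ≤ n * ∑ k ∈ range (n + 1), a k := by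
  rw [mul_sum]
  exact sum_le_sum fun k hk => mul_le_mul_of_nonneg_right
    (by exact_mod_cast Nat.lt_succ_iff.mp (mem_range.mp hk)) (ha k)

lemma sum_range_succ_natCast_mul_eq_iff {a : ℕ → ℝ} (ha : ∀ k, 0 ≤ a k) (n : ℕ) :
    ∑ k ∈ range (n + 1), (k : ℝ) * a k = n * ∑ k ∈ range (n + 1), a k ↔ ∀ k < n, a k = 0 := by
  rw [mul_sum, sum_eq_sum_iff_of_le fun k hk => mul_le_mul_of_nonneg_right
    (by exact_mod_cast Nat.lt_succ_iff.mp (mem_range.mp hk)) (ha k)]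
  constructor
  · intro h k hk
    have hk' := h k (mem_range.mpr (by omega))
    rw [mul_eq_mul_right_iff] at hk'
    exact hk'.resolve_left (by exact_mod_cast hk.ne)
  · intro h k hk
    rcases (Nat.lt_succ_iff.mp (mem_range.mp hk)).lt_or_eq with hlt | rfl
    · rw [h k hlt, mul_zero, mul_zero]
    · rfl

section Expansion

variable (n : ℕ) (c : ℕ → ℝ)

lemma sqrt_mul_hermiteNorm_sum_smul_physHermite :
    √(2 * n) * hermiteNorm (∑ k ∈ range (n + 1), c k • physHermite k) =
      √(2 * (n * ∑ k ∈ range (n + 1),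
        c k ^ 2 * gaussIntegral (physHermite k * physHermite k))) := by
  rw [hermiteNorm_sum_smul_physHermite, ← sqrt_mul (by positivity), mul_assoc]

lemma hermiteNorm_derivative_sum_smul_physHermite_le :
    hermiteNorm (derivative (∑ k ∈ range (n + 1), c k • physHermite k)) ≤
      √(2 * n) * hermiteNorm (∑ k ∈ range (n + 1), c k • physHermite k) := by
  rw [hermiteNorm_derivative_sum_smul_physHermite, sqrt_mul_hermiteNorm_sum_smul_physHermite]
  gcongr
  exact sum_range_succ_natCast_mul_le
    (fun k => mul_nonneg (sq_nonneg _) (gaussIntegral_physHermite_mul_self_pos k).le) n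

lemma hermiteNorm_derivative_sum_smul_physHermite_eq_iff :
    hermiteNorm (derivative (∑ k ∈ range (n + 1), c k • physHermite k)) =
        √(2 * n) * hermiteNorm (∑ k ∈ range (n + 1), c k • physHermite k) ↔
      ∀ k < n, c k = 0 := by
  have hnonneg (k : ℕ) : 0 ≤ c k ^ 2 * gaussIntegral (physHermite k * physHermite k) :=
    mul_nonneg (sq_nonneg _) (gaussIntegral_physHermite_mul_self_pos k).le
  have hweighted := sum_nonneg fun k (_ : k ∈ range (n + 1)) => mul_nonneg k.cast_nonneg (hnonneg k)
  have hplain := sum_nonneg fun k (_ : k ∈ range (n + 1)) => hnonneg k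
  rw [hermiteNorm_derivative_sum_smul_physHermite, sqrt_mul_hermiteNorm_sum_smul_physHermite,
    sqrt_inj (by positivity) (by positivity), mul_right_inj' two_ne_zero,
    sum_range_succ_natCast_mul_eq_iff hnonneg]
  simp [(gaussIntegral_physHermite_mul_self_pos _).ne']

end Expansion

theorem schmidt_first_derivative (n : ℕ) (p : Polynomial ℝ) (hp : p ≠ 0)
    (hdeg : p.natDegree ≤ n) :
    hermiteNorm p.derivative ≤ Real.sqrt (2 * n) * hermiteNorm p ∧
    (hermiteNorm p.derivative = Real.sqrt (2 * n) * hermiteNorm p ↔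
      ∃ c : ℝ, c ≠ 0 ∧ p = c • physHermite n) := by
  obtain ⟨c, rfl⟩ := exists_sum_smul_physHermite_eq hdeg
  refine ⟨hermiteNorm_derivative_sum_smul_physHermite_le n c, ?_⟩
  constructor
  · intro h
    have hlow := (hermiteNorm_derivative_sum_smul_physHermite_eq_iff n c).mp h
    have hp' : ∑ k ∈ range (n + 1), c k • physHermite k = c n • physHermite n := by
      rw [sum_range_succ, sum_eq_zero fun k hk => by rw [hlow k (mem_range.mp hk), zero_smul],
        zero_add]
    exact ⟨c n, fun hcn => hp (by rw [hp', hcn, zero_smul]), hp'⟩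
  · rintro ⟨d, -, hd⟩
    have hsingle : d • physHermite n =
        ∑ k ∈ range (n + 1), (Pi.single n d : ℕ → ℝ) k • physHermite k := by
      simp [Pi.single_apply, ite_smul]
    rw [hd, hsingle, hermiteNorm_derivative_sum_smul_physHermite_eq_iff]
    intro k hk
    simp [hk.ne]
end

section
/- Let s > -1, X = L²((0,∞), t^s e^{-t} dt), and let W_n be the set of polynomials of degree at most n with all coefficients nonnegative. Then for every p ∈ W_n, ∫_0^∞ p'(t)² t^s e^{-t} dt ≤ C_n(s) ∫_0^∞ p(t)² t^s e^{-t} dt, where C_n(s) = 1/((2+s)(1+s)) if -1 < s ≤ s_n and C_n(s) = n²/((2n+s)(2n+s-1)) if s > s_n, with s_n = (√(17n²+2n+1) - 3n + 1)/(2(n+1)); moreover this constant is best possible. -/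
open MeasureTheory

section MilovanovicAux

open Polynomial Finset

private lemma gamma_int (a : ℝ) (ha : -1 < a) :
    ∫ t in Set.Ioi (0:ℝ), t ^ a * Real.exp (-t) = Real.Gamma (a + 1) := by
  rw [Real.Gamma_eq_integral (by linarith : (0:ℝ) < a + 1)]
  simp only [add_sub_cancel_right]
  exact setIntegral_congr_fun measurableSet_Ioi fun x hx => mul_comm _ _

private lemma gamma_integrable (a : ℝ) (ha : -1 < a) :
    IntegrableOn (fun t : ℝ => t ^ a * Real.exp (-t)) (Set.Ioi 0) := by
  have h := Real.GammaIntegral_convergent (show (0:ℝ) < a + 1 by linarith)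
  simp only [add_sub_cancel_right] at h
  exact h.congr_fun (fun x _ => mul_comm _ _) measurableSet_Ioi

private lemma integral_sq (m : ℕ) (p : Polynomial ℝ) (hp : p.natDegree ≤ m) (s : ℝ)
    (hs : -1 < s) :
    ∫ t in Set.Ioi (0:ℝ), (p.eval t) ^ 2 * t ^ s * Real.exp (-t)
      = ∑ ij ∈ Finset.range (m+1) ×ˢ Finset.range (m+1),
          p.coeff ij.1 * p.coeff ij.2 * Real.Gamma (s + ij.1 + ij.2 + 1) := by
  have heq : Set.EqOn (fun t : ℝ => (p.eval t) ^ 2 * t ^ s * Real.exp (-t))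
      (fun t : ℝ => ∑ ij ∈ Finset.range (m+1) ×ˢ Finset.range (m+1),
        p.coeff ij.1 * p.coeff ij.2 * (t ^ (s + ij.1 + ij.2) * Real.exp (-t)))
      (Set.Ioi 0) := by
    intro t ht
    have ht0 : (0:ℝ) < t := ht
    simp only
    rw [Polynomial.eval_eq_sum_range' (Nat.lt_succ_of_le hp), sq, Finset.sum_mul_sum]
    rw [← Finset.sum_product', Finset.sum_mul, Finset.sum_mul]
    refine Finset.sum_congr rfl fun ij _ => ?_
    rw [show s + (ij.1:ℝ) + (ij.2:ℝ) = (ij.1:ℝ) + ((ij.2:ℝ) + s) by ring,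
      Real.rpow_add ht0, Real.rpow_add ht0, Real.rpow_natCast, Real.rpow_natCast]
    ring
  rw [setIntegral_congr_fun measurableSet_Ioi heq, integral_finset_sum]
  · refine Finset.sum_congr rfl fun ij _ => ?_
    rw [MeasureTheory.integral_const_mul, gamma_int _ (by
      have h1 : (0:ℝ) ≤ (ij.1:ℝ) := Nat.cast_nonneg _
      have h2 : (0:ℝ) ≤ (ij.2:ℝ) := Nat.cast_nonneg _
      linarith)]
  · intro ij _
    exact ((gamma_integrable (s + ij.1 + ij.2) (by
      have h1 : (0:ℝ) ≤ (ij.1:ℝ) := Nat.cast_nonneg _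
      have h2 : (0:ℝ) ≤ (ij.2:ℝ) := Nat.cast_nonneg _
      linarith)).const_mul _)

private lemma dichotomy (s x nr : ℝ) (hs : -1 < s) (hx1 : 1 ≤ x) (hn : 1 ≤ nr) (hxn : x ≤ nr) :
    x^2 * ((2+s)*(1+s)) ≤ (2*x+s)*(2*x+s-1)
    ∨ x^2 * ((2*nr+s)*(2*nr+s-1)) ≤ nr^2 * ((2*x+s)*(2*x+s-1)) := by
  rcases le_or_gt s (1/2) with hs2 | hs2
  · left
    have h1 : 0 ≤ 2 - 3*s - s^2 := by
      nlinarith [mul_nonneg (by linarith : (0:ℝ) ≤ s+1) (by linarith : (0:ℝ) ≤ 1/2 - s)]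
    have h2 : 0 ≤ (2-3*s-s^2)*x + s - s^2 := by
      nlinarith [mul_le_mul_of_nonneg_left hx1 h1]
    nlinarith [mul_nonneg (by linarith : (0:ℝ) ≤ x - 1) h2]
  · rcases le_or_gt ((4*s-2)*x + 2*s^2 - 2*s) 0 with hL | hL
    · left
      have hkey : s^2 + s - 1 ≤ 0 := by
        nlinarith [mul_nonneg (by linarith : (0:ℝ) ≤ x - 1) (by linarith : (0:ℝ) ≤ 4*s - 2)]
      have h2 : 0 ≤ (2-3*s-s^2)*x + s - s^2 := by
        rcases le_or_gt 0 (2-3*s-s^2) with hc | hc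
        · nlinarith [mul_le_mul_of_nonneg_left hx1 hc]
        · have hx2 : (2*s-1)*x ≤ s - s^2 := by linarith
          have := mul_le_mul_of_nonpos_left hx2 (le_of_lt hc)
          have hpos : 0 < 2*s - 1 := by linarith
          have hfin : 0 ≤ (s - s^2) * (1 - s - s^2) := by nlinarith
          nlinarith [this, hfin, hpos]
      nlinarith [mul_nonneg (by linarith : (0:ℝ) ≤ x - 1) h2]
    · right
      have h2 : 0 ≤ ((4*s-2)*nr + s^2 - s)*x + nr*(s^2-s) := by
        rcases le_or_gt s 1 with hs1 | hs1
        · nlinarith [mul_nonneg (by linarith : (0:ℝ) ≤ nr - x) (by nlinarith : (0:ℝ) ≤ s - s^2),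
            mul_nonneg (by linarith : (0:ℝ) ≤ nr) (le_of_lt hL)]
        · nlinarith [mul_nonneg (by linarith : (0:ℝ) ≤ nr) (by nlinarith [mul_le_mul_of_nonneg_left hx1 (by linarith : (0:ℝ) ≤ 4*s-2)] : (0:ℝ) ≤ (4*s-2)*x + s^2 - s), mul_nonneg (by linarith : (0:ℝ) ≤ x) (by nlinarith : (0:ℝ) ≤ s^2 - s)]
      nlinarith [mul_nonneg (by linarith : (0:ℝ) ≤ nr - x) h2]

private lemma q_iff (n : ℕ) (hn : 1 ≤ n) (s : ℝ) (hs : -1 < s) :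
    (s ≤ (Real.sqrt (17 * n ^ 2 + 2 * n + 1) - 3 * n + 1) / (2 * (n + 1)) ↔
      ((n:ℝ)+1)*s^2 + (3*n-1)*s - 2*n ≤ 0) := by
  set N : ℝ := (n:ℝ) with hN
  have hN1 : 1 ≤ N := by rw [hN]; exact_mod_cast hn
  have harg : (0:ℝ) ≤ 17 * N ^ 2 + 2 * N + 1 := by nlinarith
  set R : ℝ := Real.sqrt (17 * N ^ 2 + 2 * N + 1) with hRdef
  have hR0 : 0 ≤ R := Real.sqrt_nonneg _
  have hR2 : R^2 = 17 * N ^ 2 + 2 * N + 1 := Real.sq_sqrt harg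
  have hden : (0:ℝ) < 2 * (N + 1) := by linarith
  have hR4 : 4*N ≤ R := by nlinarith [sq_nonneg (R - 4*N)]
  rw [le_div_iff₀ hden]
  constructor
  · intro h
    have hBlow : -R ≤ s * (2*(N+1)) + 3*N - 1 := by nlinarith
    nlinarith [mul_nonneg (by linarith : (0:ℝ) ≤ R - (s * (2*(N+1)) + 3*N - 1))
      (by linarith : (0:ℝ) ≤ R + (s * (2*(N+1)) + 3*N - 1))]
  · intro h
    rcases le_or_gt (s * (2*(N+1)) + 3*N - 1) 0 with hB | hB
    · linarith
    · nlinarith [hB, hR0, hR2]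

private lemma key (n : ℕ) (hn : 1 ≤ n) (s : ℝ) (hs : -1 < s) (x : ℝ) (hx1 : 1 ≤ x)
    (hxn : x ≤ (n:ℝ)) :
    x^2 ≤ (if s ≤ (Real.sqrt (17 * n ^ 2 + 2 * n + 1) - 3 * n + 1) / (2 * (n + 1)) then
        1 / ((2 + s) * (1 + s))
      else (n : ℝ) ^ 2 / ((2 * n + s) * (2 * n + s - 1))) * ((2*x+s)*(2*x+s-1)) := by
  have hN1 : (1:ℝ) ≤ (n:ℝ) := by exact_mod_cast hn
  have hD1 : (0:ℝ) < (2+s)*(1+s) := by nlinarith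
  have hDx : (0:ℝ) < (2*x+s)*(2*x+s-1) := by nlinarith
  have hDn : (0:ℝ) < (2*(n:ℝ)+s)*(2*(n:ℝ)+s-1) := by nlinarith
  rcases dichotomy s x (n:ℝ) hs hx1 hN1 hxn with h | h
  · have h1 : x^2 ≤ 1/((2+s)*(1+s)) * ((2*x+s)*(2*x+s-1)) := by
      rw [one_div, inv_mul_eq_div, le_div_iff₀ hD1]; linarith
    split_ifs with hcond
    · exact h1
    · have hq : 0 ≤ ((n:ℝ)+1)*s^2 + (3*(n:ℝ)-1)*s - 2*(n:ℝ) := by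
        have := (q_iff n hn s hs).mpr
        by_contra hneg
        exact hcond (this (by linarith))
      have hcmp : 1/((2+s)*(1+s)) ≤ (n:ℝ)^2/((2*(n:ℝ)+s)*(2*(n:ℝ)+s-1)) := by
        rw [div_le_div_iff₀ hD1 hDn]
        nlinarith [mul_nonneg (by linarith : (0:ℝ) ≤ (n:ℝ)-1) hq]
      calc x^2 ≤ _ := h1
        _ ≤ _ := mul_le_mul_of_nonneg_right hcmp (le_of_lt hDx)
  · have h1 : x^2 ≤ (n:ℝ)^2/((2*(n:ℝ)+s)*(2*(n:ℝ)+s-1)) * ((2*x+s)*(2*x+s-1)) := by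
      rw [div_mul_eq_mul_div, le_div_iff₀ hDn]; nlinarith
    split_ifs with hcond
    · have hq : ((n:ℝ)+1)*s^2 + (3*(n:ℝ)-1)*s - 2*(n:ℝ) ≤ 0 := (q_iff n hn s hs).mp hcond
      have hcmp : (n:ℝ)^2/((2*(n:ℝ)+s)*(2*(n:ℝ)+s-1)) ≤ 1/((2+s)*(1+s)) := by
        rw [div_le_div_iff₀ hDn hD1]
        nlinarith [mul_nonpos_of_nonneg_of_nonpos (by linarith : (0:ℝ) ≤ (n:ℝ)-1) hq]
      calc x^2 ≤ _ := h1
        _ ≤ _ := mul_le_mul_of_nonneg_right hcmp (le_of_lt hDx)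
    · exact h1

private lemma mem_bound (n : ℕ) (hn : 1 ≤ n) (s : ℝ) (hs : -1 < s) (C : ℝ) (hC0 : 0 ≤ C)
    (hkey : ∀ x : ℝ, 1 ≤ x → x ≤ (n:ℝ) → x^2 ≤ C * ((2*x+s)*(2*x+s-1)))
    (p : Polynomial ℝ) (hdeg : p.natDegree ≤ n) (hcoef : ∀ i, 0 ≤ p.coeff i) :
    (∫ t in Set.Ioi (0:ℝ), (p.derivative.eval t) ^ 2 * t ^ s * Real.exp (-t)) ≤
      C * ∫ t in Set.Ioi (0:ℝ), (p.eval t) ^ 2 * t ^ s * Real.exp (-t) := by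
  have hd' : p.derivative.natDegree ≤ n - 1 :=
    le_trans (Polynomial.natDegree_derivative_le p) (Nat.sub_le_sub_right hdeg 1)
  rw [integral_sq (n-1) p.derivative hd' s hs, integral_sq n p hdeg s hs,
    Nat.sub_add_cancel hn]
  set f : ℕ × ℕ → ℝ := fun ij =>
    p.coeff ij.1 * p.coeff ij.2 * Real.Gamma (s + ij.1 + ij.2 + 1) with hf
  have hf0 : ∀ ij : ℕ × ℕ, 0 ≤ f ij := by
    intro ij
    have h1 : (0:ℝ) ≤ (ij.1:ℝ) := Nat.cast_nonneg _
    have h2 : (0:ℝ) ≤ (ij.2:ℝ) := Nat.cast_nonneg _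
    exact mul_nonneg (mul_nonneg (hcoef _) (hcoef _))
      (Real.Gamma_pos_of_pos (by linarith)).le
  have step1 : ∑ ij ∈ Finset.range n ×ˢ Finset.range n,
      p.derivative.coeff ij.1 * p.derivative.coeff ij.2 * Real.Gamma (s + ij.1 + ij.2 + 1)
      ≤ ∑ ij ∈ Finset.range n ×ˢ Finset.range n, C * f (ij.1 + 1, ij.2 + 1) := by
    refine Finset.sum_le_sum fun ij hij => ?_
    obtain ⟨hk, hl⟩ := Finset.mem_product.mp hij
    rw [Finset.mem_range] at hk hl
    have hk' : ((ij.1:ℝ)) + 1 ≤ (n:ℝ) := by exact_mod_cast hk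
    have hl' : ((ij.2:ℝ)) + 1 ≤ (n:ℝ) := by exact_mod_cast hl
    have h1 : (0:ℝ) ≤ (ij.1:ℝ) := Nat.cast_nonneg _
    have h2 : (0:ℝ) ≤ (ij.2:ℝ) := Nat.cast_nonneg _
    have hu : (0:ℝ) < s + ij.1 + ij.2 + 1 := by linarith
    have hscalar := hkey (((ij.1:ℝ)+(ij.2:ℝ)+2)/2) (by linarith) (by linarith)
    have hamgm : ((ij.1:ℝ)+1)*((ij.2:ℝ)+1) ≤ (((ij.1:ℝ)+(ij.2:ℝ)+2)/2)^2 := by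
      nlinarith [sq_nonneg ((ij.1:ℝ) - (ij.2:ℝ))]
    have hscalar2 : ((ij.1:ℝ)+1)*((ij.2:ℝ)+1)
        ≤ C * ((s+ij.1+ij.2+2)*(s+ij.1+ij.2+1)) := by
      have heq : (2*(((ij.1:ℝ)+(ij.2:ℝ)+2)/2)+s)*(2*(((ij.1:ℝ)+(ij.2:ℝ)+2)/2)+s-1)
          = (s+ij.1+ij.2+2)*(s+ij.1+ij.2+1) := by ring
      rw [heq] at hscalar
      linarith
    have hG : Real.Gamma (s + ((ij.1+1 : ℕ):ℝ) + ((ij.2+1 : ℕ):ℝ) + 1)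
        = (s+ij.1+ij.2+2)*((s+ij.1+ij.2+1)*Real.Gamma (s+ij.1+ij.2+1)) := by
      have e1 : s + ((ij.1+1 : ℕ):ℝ) + ((ij.2+1 : ℕ):ℝ) + 1 = (s+ij.1+ij.2+2) + 1 := by
        push_cast; ring
      rw [e1, Real.Gamma_add_one (by linarith),
        show s+(ij.1:ℝ)+(ij.2:ℝ)+2 = (s+ij.1+ij.2+1)+1 by ring,
        Real.Gamma_add_one (ne_of_gt hu)]
    simp only [hf]
    rw [Polynomial.coeff_derivative, Polynomial.coeff_derivative, hG]
    have hprod : 0 ≤ p.coeff (ij.1+1) * p.coeff (ij.2+1) * Real.Gamma (s+ij.1+ij.2+1) :=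
      mul_nonneg (mul_nonneg (hcoef _) (hcoef _)) (Real.Gamma_pos_of_pos hu).le
    nlinarith [mul_le_mul_of_nonneg_right hscalar2 hprod]
  have step2 : ∑ ij ∈ Finset.range n ×ˢ Finset.range n, f (ij.1 + 1, ij.2 + 1)
      ≤ ∑ ij ∈ Finset.range (n+1) ×ˢ Finset.range (n+1), f ij := by
    have hinj : ∀ x ∈ Finset.range n ×ˢ Finset.range n,
        ∀ y ∈ Finset.range n ×ˢ Finset.range n,
        (fun ij : ℕ×ℕ => (ij.1+1, ij.2+1)) x = (fun ij : ℕ×ℕ => (ij.1+1, ij.2+1)) y →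
          x = y := by
      intro a _ b _ h
      simp only [Prod.ext_iff] at h ⊢
      omega
    rw [← Finset.sum_image hinj]
    refine Finset.sum_le_sum_of_subset_of_nonneg ?_ (fun i _ _ => hf0 i)
    intro x hx
    simp only [Finset.mem_image, Finset.mem_product, Finset.mem_range] at hx ⊢
    obtain ⟨a, ⟨ha1, ha2⟩, rfl⟩ := hx
    exact ⟨by omega, by omega⟩
  calc ∑ ij ∈ Finset.range n ×ˢ Finset.range n,
      p.derivative.coeff ij.1 * p.derivative.coeff ij.2 * Real.Gamma (s + ij.1 + ij.2 + 1)
      ≤ ∑ ij ∈ Finset.range n ×ˢ Finset.range n, C * f (ij.1 + 1, ij.2 + 1) := step1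
    _ = C * ∑ ij ∈ Finset.range n ×ˢ Finset.range n, f (ij.1 + 1, ij.2 + 1) := by
        rw [Finset.mul_sum]
    _ ≤ C * ∑ ij ∈ Finset.range (n+1) ×ˢ Finset.range (n+1), f ij :=
        mul_le_mul_of_nonneg_left step2 hC0

private lemma int_CXpow (a : ℝ) (m : ℕ) (s : ℝ) (hs : -1 < s) :
    ∫ t in Set.Ioi (0:ℝ),
        ((Polynomial.C a * Polynomial.X^m : Polynomial ℝ).eval t)^2 * t^s * Real.exp (-t)
      = a^2 * Real.Gamma (s + 2*m + 1) := by
  rw [integral_sq m _ (le_trans (Polynomial.natDegree_C_mul_le a _)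
    (le_of_eq (Polynomial.natDegree_X_pow m))) s hs]
  rw [Finset.sum_eq_single_of_mem (m, m)
    (Finset.mem_product.mpr ⟨Finset.self_mem_range_succ _, Finset.self_mem_range_succ _⟩)]
  · simp only [Polynomial.coeff_C_mul, Polynomial.coeff_X_pow, eq_self_iff_true, if_true,
      mul_one]
    rw [show a * a = a^2 by ring]
    congr 1
    ring
  · intro b _ hbne
    by_cases h1 : b.1 = m
    · have h2 : b.2 ≠ m := fun h => hbne (Prod.ext h1 h)
      simp [Polynomial.coeff_X_pow, h2]
    · simp [Polynomial.coeff_X_pow, h1]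

private lemma int_Xpow (m : ℕ) (s : ℝ) (hs : -1 < s) :
    ∫ t in Set.Ioi (0:ℝ), ((Polynomial.X^m : Polynomial ℝ).eval t)^2 * t^s * Real.exp (-t)
      = Real.Gamma (s + 2*m + 1) := by
  have h := int_CXpow 1 m s hs
  simpa using h

private lemma lower_test (m : ℕ) (hm : 1 ≤ m) (s : ℝ) (hs : -1 < s) (c : ℝ)
    (h : (∫ t in Set.Ioi (0:ℝ),
        ((Polynomial.derivative (Polynomial.X^m : Polynomial ℝ)).eval t)^2 * t^s
          * Real.exp (-t))
      ≤ c * ∫ t in Set.Ioi (0:ℝ),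
        (((Polynomial.X^m : Polynomial ℝ)).eval t)^2 * t^s * Real.exp (-t)) :
    (m:ℝ)^2/((2*m+s)*(2*m+s-1)) ≤ c := by
  have hm' : (1:ℝ) ≤ (m:ℝ) := by exact_mod_cast hm
  rw [Polynomial.derivative_X_pow, int_CXpow _ _ s hs, int_Xpow _ s hs] at h
  have hcast : ((m-1:ℕ):ℝ) = (m:ℝ) - 1 := by
    rw [Nat.cast_sub hm, Nat.cast_one]
  rw [show s + 2*((m-1:ℕ):ℝ) + 1 = s + 2*(m:ℝ) - 1 by rw [hcast]; ring] at h
  have hGpos : 0 < Real.Gamma (s + 2*(m:ℝ) - 1) := Real.Gamma_pos_of_pos (by linarith)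
  rw [show s + 2*(m:ℝ) + 1 = (s + 2*(m:ℝ)) + 1 by ring,
    Real.Gamma_add_one (by intro h0; nlinarith : s + 2*(m:ℝ) ≠ 0),
    show s + 2*(m:ℝ) = (s + 2*(m:ℝ) - 1) + 1 by ring,
    Real.Gamma_add_one (by intro h0; nlinarith : s + 2*(m:ℝ) - 1 ≠ 0)] at h
  have hD : (0:ℝ) < (2*(m:ℝ)+s)*(2*(m:ℝ)+s-1) := by nlinarith
  rw [show s + 2*(m:ℝ) - 1 + 1 - 1 = s + 2*(m:ℝ) - 1 by ring] at h
  rw [div_le_iff₀ hD]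
  nlinarith [h, hGpos]

end MilovanovicAux

theorem milovanovic_varma (n : ℕ) (hn : 1 ≤ n) (s : ℝ) (hs : s > -1) :
    IsLeast
      {c : ℝ | ∀ p : Polynomial ℝ, p.natDegree ≤ n → (∀ i, 0 ≤ p.coeff i) →
        (∫ t in Set.Ioi (0 : ℝ), (p.derivative.eval t) ^ 2 * t ^ s * Real.exp (-t)) ≤
          c * ∫ t in Set.Ioi (0 : ℝ), (p.eval t) ^ 2 * t ^ s * Real.exp (-t)}
      (if s ≤ (Real.sqrt (17 * n ^ 2 + 2 * n + 1) - 3 * n + 1) / (2 * (n + 1)) then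
        1 / ((2 + s) * (1 + s))
      else (n : ℝ) ^ 2 / ((2 * n + s) * (2 * n + s - 1))) := by
  constructor
  · intro p hdeg hcoef
    have hC0 : 0 ≤ (if s ≤ (Real.sqrt (17 * n ^ 2 + 2 * n + 1) - 3 * n + 1) / (2 * (n + 1))
        then 1 / ((2 + s) * (1 + s))
        else (n : ℝ) ^ 2 / ((2 * n + s) * (2 * n + s - 1))) := by
      have h1 := key n hn s hs 1 le_rfl (by exact_mod_cast hn)
      nlinarith [h1, (show (0:ℝ) < (2*1+s)*(2*1+s-1) by nlinarith)]
    exact mem_bound n hn s hs _ hC0 (fun x hx1 hxn => key n hn s hs x hx1 hxn) p hdeg hcoef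
  · intro c hc
    have hco1 : ∀ i, 0 ≤ ((Polynomial.X:Polynomial ℝ)^1).coeff i := by
      intro i; rw [Polynomial.coeff_X_pow]; split <;> norm_num
    have hcon : ∀ i, 0 ≤ ((Polynomial.X:Polynomial ℝ)^n).coeff i := by
      intro i; rw [Polynomial.coeff_X_pow]; split <;> norm_num
    have h1 := lower_test 1 le_rfl s hs c
      (hc (Polynomial.X^1) (by rw [Polynomial.natDegree_X_pow]; exact hn) hco1)
    have h2 := lower_test n hn s hs c
      (hc (Polynomial.X^n) (le_of_eq (Polynomial.natDegree_X_pow n)) hcon)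
    have h1' : 1/((2+s)*(1+s)) ≤ c := by
      have e : ((1:ℕ):ℝ)^2/((2*((1:ℕ):ℝ)+s)*(2*((1:ℕ):ℝ)+s-1)) = 1/((2+s)*(1+s)) := by
        push_cast; ring_nf
      rw [e] at h1
      exact h1
    split_ifs
    · exact h1'
    · exact h2
end
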